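/- arXiv:2409.14884 — 6 statements merged into one kernel-verified Lean document; each statement's English description precedes it below -/
import Mathlib

section
/- Let χ be a nonnegative kernel with finite max-moments m_0(χ), m_1(χ), m_2(χ) and inf_{[1,e]} χ = η > 0, and let Ψ(x) = 1 + (log x)². Then for every x ∈ ℝ⁺ and w > 0, the max-product exponential sampling operator satisfies |MG_w^χ(Ψ, x)| ≤ (1 + log² x)/η · [m_0(χ) + (2/w) m_1(χ) + (1/w²) m_2(χ)]. -/
lemma stmt8_term_bound (c m0 m1 m2 w L kk : ℝ) (hw : 0 < w) (hc0 : 0 ≤ c)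
    (hcm0 : c ≤ m0) (hcm1 : c * |kk - w * L| ≤ m1) (hcm2 : c * (kk - w * L) ^ 2 ≤ m2)
    (hm1n : 0 ≤ m1) (hm2n : 0 ≤ m2) :
    c * (1 + (kk / w) ^ 2) ≤ (1 + L ^ 2) * (m0 + 2 / w * m1 + 1 / w ^ 2 * m2) := by
  have hw2 : (0:ℝ) < w ^ 2 := by positivity
  set t : ℝ := kk - w * L with ht
  have hk : kk = t + w * L := by rw [ht]; ring
  have H : c * (w ^ 2 + kk ^ 2) ≤ (1 + L ^ 2) * (m0 * w ^ 2 + 2 * w * m1 + m2) := by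
    have h1 : c * (w ^ 2 * (1 + L ^ 2)) ≤ m0 * (w ^ 2 * (1 + L ^ 2)) :=
      mul_le_mul_of_nonneg_right hcm0 (by positivity)
    have h2 : c * t ^ 2 ≤ m2 * (1 + L ^ 2) := by nlinarith [sq_nonneg L]
    have h3 : 2 * w * (c * t * L) ≤ 2 * w * m1 * (1 + L ^ 2) := by
      have habs : c * t * L ≤ c * |t| * |L| := by
        calc c * t * L ≤ |c * t * L| := le_abs_self _
          _ = c * |t| * |L| := by rw [abs_mul, abs_mul, abs_of_nonneg hc0]
      have h4 : c * |t| * |L| ≤ m1 * |L| :=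
        mul_le_mul_of_nonneg_right hcm1 (abs_nonneg _)
      have h5 : m1 * |L| ≤ m1 * (1 + L ^ 2) := by
        apply mul_le_mul_of_nonneg_left _ hm1n
        nlinarith [sq_abs L, sq_nonneg (|L| - 1), abs_nonneg L]
      nlinarith
    rw [hk]; nlinarith [h1, h2, h3]
  calc c * (1 + (kk / w) ^ 2) = c * (w ^ 2 + kk ^ 2) / w ^ 2 := by
        field_simp
    _ ≤ (1 + L ^ 2) * (m0 * w ^ 2 + 2 * w * m1 + m2) / w ^ 2 :=
        (div_le_div_iff_of_pos_right hw2).mpr H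
    _ = (1 + L ^ 2) * (m0 + 2 / w * m1 + 1 / w ^ 2 * m2) := by
        field_simp

/-- Max-product generalized exponential sampling operator with global index set ℤ. -/
noncomputable def MGZ (χ f : ℝ → ℝ) (w x : ℝ) : ℝ :=
  (⨆ k : ℤ, χ (Real.exp (-(k:ℝ)) * x ^ w) * f (Real.exp ((k:ℝ) / w))) /
  (⨆ k : ℤ, χ (Real.exp (-(k:ℝ)) * x ^ w))

/-- weighted boundedness of MGZ on Ψ(x) = 1 + log² x. -/
theorem stmt8 (χ : ℝ → ℝ) (hχ0 : ∀ u : ℝ, 0 ≤ χ u)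
    (m0 m1 m2 : ℝ)
    (hm0 : ∀ u > (0:ℝ), ∀ k : ℤ, |χ (Real.exp (-(k:ℝ)) * u)| ≤ m0)
    (hm1 : ∀ u > (0:ℝ), ∀ k : ℤ,
      |χ (Real.exp (-(k:ℝ)) * u)| * |(k:ℝ) - Real.log u| ≤ m1)
    (hm2 : ∀ u > (0:ℝ), ∀ k : ℤ,
      |χ (Real.exp (-(k:ℝ)) * u)| * |(k:ℝ) - Real.log u| ^ 2 ≤ m2)
    (η : ℝ) (hη : 0 < η) (hinf : ∀ x ∈ Set.Icc (1:ℝ) (Real.exp 1), η ≤ χ x) :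
    ∀ x > (0:ℝ), ∀ w > (0:ℝ),
      |MGZ χ (fun y => 1 + Real.log y ^ 2) w x| ≤
        (1 + Real.log x ^ 2) / η * (m0 + 2 / w * m1 + 1 / w ^ 2 * m2) := by
  intro x hx w hw
  have hu0 : 0 < x ^ w := Real.rpow_pos_of_pos hx w
  have hlogu : Real.log (x ^ w) = w * Real.log x := Real.log_rpow hx w
  have hm0n : 0 ≤ m0 := le_trans (abs_nonneg _) (hm0 1 one_pos 0)
  have hm1n : 0 ≤ m1 := by
    have h := hm1 (Real.exp 1) (Real.exp_pos 1) 0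
    have h0 : (0:ℝ) ≤ |χ (Real.exp (-((0:ℤ):ℝ)) * Real.exp 1)| * |((0:ℤ):ℝ) - Real.log (Real.exp 1)| :=
      mul_nonneg (abs_nonneg _) (abs_nonneg _)
    linarith
  have hm2n : 0 ≤ m2 := by
    have h := hm2 (Real.exp 1) (Real.exp_pos 1) 0
    have h0 : (0:ℝ) ≤ |χ (Real.exp (-((0:ℤ):ℝ)) * Real.exp 1)| * |((0:ℤ):ℝ) - Real.log (Real.exp 1)| ^ 2 :=
      mul_nonneg (abs_nonneg _) (by positivity)
    linarith
  set L := Real.log x with hL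
  set S := m0 + 2 / w * m1 + 1 / w ^ 2 * m2 with hS
  have hSn : 0 ≤ S := by
    have h1 : 0 ≤ 2 / w * m1 := by positivity
    have h2 : 0 ≤ 1 / w ^ 2 * m2 := by positivity
    rw [hS]; linarith
  set N := (1 + L ^ 2) * S with hN
  have hNn : 0 ≤ N := mul_nonneg (by positivity) hSn
  -- per-term bound of the numerator
  have hterm : ∀ k : ℤ,
      χ (Real.exp (-(k:ℝ)) * x ^ w) * (1 + ((k:ℝ) / w) ^ 2) ≤ N := by
    intro k
    have hc0 : 0 ≤ χ (Real.exp (-(k:ℝ)) * x ^ w) := hχ0 _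
    have hcm0 : χ (Real.exp (-(k:ℝ)) * x ^ w) ≤ m0 := by
      have := hm0 (x ^ w) hu0 k; rwa [abs_of_nonneg hc0] at this
    have hcm1 : χ (Real.exp (-(k:ℝ)) * x ^ w) * |(k:ℝ) - w * L| ≤ m1 := by
      have := hm1 (x ^ w) hu0 k; rwa [abs_of_nonneg hc0, hlogu] at this
    have hcm2 : χ (Real.exp (-(k:ℝ)) * x ^ w) * ((k:ℝ) - w * L) ^ 2 ≤ m2 := by
      have := hm2 (x ^ w) hu0 k; rwa [abs_of_nonneg hc0, hlogu, sq_abs] at this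
    exact stmt8_term_bound _ m0 m1 m2 w L _ hw hc0 hcm0 hcm1 hcm2 hm1n hm2n
  -- denominator bounds
  have hbdd : BddAbove (Set.range fun k : ℤ => χ (Real.exp (-(k:ℝ)) * x ^ w)) := by
    refine ⟨m0, ?_⟩
    rintro _ ⟨k, rfl⟩
    have := hm0 (x ^ w) hu0 k
    rwa [abs_of_nonneg (hχ0 _)] at this
  have hDη : η ≤ ⨆ k : ℤ, χ (Real.exp (-(k:ℝ)) * x ^ w) := by
    set k0 : ℤ := ⌊Real.log (x ^ w)⌋ with hk0
    have h1 : (k0 : ℝ) ≤ Real.log (x ^ w) := Int.floor_le _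
    have h2 : Real.log (x ^ w) ≤ (k0 : ℝ) + 1 := le_of_lt (Int.lt_floor_add_one _)
    have harg : Real.exp (-(k0:ℝ)) * x ^ w = Real.exp (Real.log (x ^ w) - (k0:ℝ)) := by
      rw [Real.exp_sub, Real.exp_log hu0, div_eq_mul_inv, ← Real.exp_neg]; ring
    have hmem : Real.exp (-(k0:ℝ)) * x ^ w ∈ Set.Icc (1:ℝ) (Real.exp 1) := by
      rw [harg]
      constructor
      · rw [show (1:ℝ) = Real.exp 0 from (Real.exp_zero).symm]
        exact Real.exp_le_exp.mpr (by linarith)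
      · exact Real.exp_le_exp.mpr (by linarith)
    exact le_trans (hinf _ hmem) (le_ciSup hbdd k0)
  have hD0 : 0 < ⨆ k : ℤ, χ (Real.exp (-(k:ℝ)) * x ^ w) := lt_of_lt_of_le hη hDη
  -- numerator bounds
  have hNumle : (⨆ k : ℤ, χ (Real.exp (-(k:ℝ)) * x ^ w) *
      ((fun y => 1 + Real.log y ^ 2) (Real.exp ((k:ℝ) / w)))) ≤ N := by
    apply ciSup_le
    intro k
    simpa [Real.log_exp] using hterm k
  have hNum0 : 0 ≤ ⨆ k : ℤ, χ (Real.exp (-(k:ℝ)) * x ^ w) *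
      ((fun y => 1 + Real.log y ^ 2) (Real.exp ((k:ℝ) / w))) := by
    apply Real.iSup_nonneg
    intro k
    exact mul_nonneg (hχ0 _) (by positivity)
  rw [MGZ, abs_of_nonneg (div_nonneg hNum0 (le_of_lt hD0))]
  calc (⨆ k : ℤ, χ (Real.exp (-(k:ℝ)) * x ^ w) *
        ((fun y => 1 + Real.log y ^ 2) (Real.exp ((k:ℝ) / w)))) /
        (⨆ k : ℤ, χ (Real.exp (-(k:ℝ)) * x ^ w)) ≤ N / η :=
      div_le_div₀ hNn hNumle hη hDη
    _ = (1 + L ^ 2) / η * S := by rw [hN]; ring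
end

section
/- Let χ be a nonnegative kernel with m_2(χ) < ∞ and inf_{[1,e]} χ = η > 0. Let f : ℝ⁺ → [0,∞) be bounded and log-continuous at a point x ∈ ℝ⁺ (i.e., continuous in the variable log x). Then lim_{w → ∞} MG_w^χ(f, x) = f(x). -/
/-!
For `k = ⌊w log x⌋` the point `e^{-k} x^w` lies in `[1, e]`, so the denominator of `MGZ χ f w x`
is at least `η`, and the numerator differs from `f x` times the denominator by at most
`sup_k χ(e^{-k} x^w) |f(e^{k/w}) - f x|`. On the indices with `|k/w - log x| ≤ δ` this is small
by log-continuity of `f`; on the others `|k - w log x| > δ w`, and the second absolute moment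
gives `χ(e^{-k} x^w) ≤ m₂ / (δ w)²`, which tends to `0` as `w → ∞`.
-/

open Real Filter Topology Set

theorem abs_ciSup_mul_sub_mul_ciSup_le {ι : Type*} [Nonempty ι] {g a : ι → ℝ} {c S : ℝ}
    (hg : ∀ k, 0 ≤ g k) (hgb : BddAbove (range g)) (hc : 0 ≤ c)
    (hS : ∀ k, g k * |a k - c| ≤ S) :
    |(⨆ k, g k * a k) - c * ⨆ k, g k| ≤ S := by
  have hupper : ∀ k, g k * a k ≤ c * g k + S := fun k => by
    nlinarith [hS k, le_abs_self (a k - c), hg k]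
  have hlower : ∀ k, c * g k ≤ g k * a k + S := fun k => by
    nlinarith [hS k, neg_abs_le (a k - c), hg k]
  obtain ⟨M, hM⟩ := hgb
  have hgM : ∀ k, g k ≤ M := fun k => hM (mem_range_self k)
  have hcg : BddAbove (range fun k => c * g k) :=
    ⟨c * M, forall_mem_range.2 fun k => by gcongr; exact hgM k⟩
  have hga : BddAbove (range fun k => g k * a k) :=
    ⟨c * M + S, forall_mem_range.2 fun k => (hupper k).trans (by gcongr; exact hgM k)⟩
  rw [abs_sub_le_iff, mul_iSup_of_nonneg hc, sub_le_iff_le_add', sub_le_iff_le_add']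
  exact ⟨ciSup_le fun k => (hupper k).trans (by gcongr; exact le_ciSup hcg k),
    ciSup_le fun k => (hlower k).trans (by gcongr; exact le_ciSup hga k)⟩

section Kernel

variable {χ : ℝ → ℝ}

theorem exists_kernel_ge {η : ℝ} (hinf : ∀ x ∈ Icc (1:ℝ) (exp 1), η ≤ χ x) {u : ℝ} (hu : 0 < u) :
    ∃ k : ℤ, η ≤ χ (exp (-(k:ℝ)) * u) := by
  refine ⟨⌊log u⌋, hinf _ ?_⟩
  rw [← exp_log hu, ← exp_add, exp_log hu]
  have h0 := Int.floor_le (log u)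
  have h1 := Int.lt_floor_add_one (log u)
  constructor
  · exact one_le_exp (by linarith)
  · exact exp_le_exp.2 (by linarith)

theorem bddAbove_kernel {m0 : ℝ} (hm0 : ∀ u > (0:ℝ), ∀ k : ℤ, |χ (exp (-(k:ℝ)) * u)| ≤ m0)
    {u : ℝ} (hu : 0 < u) : BddAbove (range fun k : ℤ => χ (exp (-(k:ℝ)) * u)) :=
  ⟨m0, forall_mem_range.2 fun k => (le_abs_self _).trans (hm0 u hu k)⟩

theorem kernel_le_div_sq {m2 : ℝ}
    (hm2 : ∀ u > (0:ℝ), ∀ k : ℤ, |χ (exp (-(k:ℝ)) * u)| * |(k:ℝ) - log u| ^ 2 ≤ m2)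
    (hχ0 : ∀ u, 0 ≤ χ u) {u r : ℝ} (hu : 0 < u) (hr : 0 < r) {k : ℤ}
    (hk : r ≤ |(k:ℝ) - log u|) : χ (exp (-(k:ℝ)) * u) ≤ m2 / r ^ 2 := by
  rw [le_div_iff₀ (by positivity)]
  calc χ (exp (-(k:ℝ)) * u) * r ^ 2 ≤ χ (exp (-(k:ℝ)) * u) * |(k:ℝ) - log u| ^ 2 := by
        gcongr; exact hχ0 _
    _ ≤ m2 := by simpa [abs_of_nonneg (hχ0 _)] using hm2 u hu k

theorem kernel_mul_abs_sub_le {m0 m2 : ℝ} (hχ0 : ∀ u, 0 ≤ χ u)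
    (hm0 : ∀ u > (0:ℝ), ∀ k : ℤ, |χ (exp (-(k:ℝ)) * u)| ≤ m0)
    (hm2 : ∀ u > (0:ℝ), ∀ k : ℤ, |χ (exp (-(k:ℝ)) * u)| * |(k:ℝ) - log u| ^ 2 ≤ m2)
    {f : ℝ → ℝ} {Bf : ℝ} (hf0 : ∀ y > (0:ℝ), 0 ≤ f y) (hfb : ∀ y > (0:ℝ), f y ≤ Bf)
    {x ε δ : ℝ} (hx : 0 < x) (hε : 0 < ε) (hδ : 0 < δ)
    (hcont : ∀ y > (0:ℝ), |log y - log x| ≤ δ → |f y - f x| < ε)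
    {w : ℝ} (hw : 0 < w) (k : ℤ) :
    χ (exp (-(k:ℝ)) * x ^ w) * |f (exp ((k:ℝ) / w)) - f x| ≤ m0 * ε + Bf * m2 / (δ * w) ^ 2 := by
  have hxw : 0 < x ^ w := rpow_pos_of_pos hx w
  have hm0_nonneg : 0 ≤ m0 := (abs_nonneg _).trans (hm0 1 one_pos 0)
  have hm2_nonneg : 0 ≤ m2 := (mul_nonneg (abs_nonneg _) (sq_nonneg _)).trans (hm2 1 one_pos 0)
  have hBf_nonneg : 0 ≤ Bf := (hf0 x hx).trans (hfb x hx)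
  have hχk_le : χ (exp (-(k:ℝ)) * x ^ w) ≤ m0 := (le_abs_self _).trans (hm0 _ hxw k)
  by_cases hnear : |log (exp ((k:ℝ) / w)) - log x| ≤ δ
  · have hfk := hcont _ (exp_pos _) hnear
    calc _ ≤ m0 * ε := by gcongr
      _ ≤ m0 * ε + Bf * m2 / (δ * w) ^ 2 := le_add_of_nonneg_right (by positivity)
  · push Not at hnear
    have hfar : δ * w ≤ |(k:ℝ) - log (x ^ w)| := by
      rw [log_exp] at hnear
      rw [log_rpow hx, show (k:ℝ) - w * log x = w * ((k:ℝ) / w - log x) by field_simp,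
        abs_mul, abs_of_pos hw, mul_comm]
      gcongr
    have hfk : |f (exp ((k:ℝ) / w)) - f x| ≤ Bf :=
      abs_sub_le_of_nonneg_of_le (hf0 _ (exp_pos _)) (hfb _ (exp_pos _)) (hf0 x hx) (hfb x hx)
    calc _ ≤ m2 / (δ * w) ^ 2 * Bf :=
          mul_le_mul (kernel_le_div_sq hm2 hχ0 hxw (by positivity) hfar) hfk (abs_nonneg _)
            (by positivity)
      _ = Bf * m2 / (δ * w) ^ 2 := by ring
      _ ≤ m0 * ε + Bf * m2 / (δ * w) ^ 2 := le_add_of_nonneg_left (by positivity)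

theorem abs_MGZ_sub_le {m0 η : ℝ} (hχ0 : ∀ u, 0 ≤ χ u)
    (hm0 : ∀ u > (0:ℝ), ∀ k : ℤ, |χ (exp (-(k:ℝ)) * u)| ≤ m0)
    (hη : 0 < η) (hinf : ∀ x ∈ Icc (1:ℝ) (exp 1), η ≤ χ x)
    {f : ℝ → ℝ} {x w S : ℝ} (hx : 0 < x) (hfx : 0 ≤ f x)
    (hS : ∀ k : ℤ, χ (exp (-(k:ℝ)) * x ^ w) * |f (exp ((k:ℝ) / w)) - f x| ≤ S) :
    |MGZ χ f w x - f x| ≤ S / η := by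
  have hxw : 0 < x ^ w := rpow_pos_of_pos hx w
  set D := ⨆ k : ℤ, χ (exp (-(k:ℝ)) * x ^ w)
  have hD : η ≤ D := by
    obtain ⟨k, hk⟩ := exists_kernel_ge hinf hxw
    exact hk.trans (le_ciSup (bddAbove_kernel hm0 hxw) k)
  have hS0 : 0 ≤ S := (mul_nonneg (hχ0 _) (abs_nonneg _)).trans (hS 0)
  have hnum := abs_ciSup_mul_sub_mul_ciSup_le (fun k => hχ0 _) (bddAbove_kernel hm0 hxw) hfx hS
  rw [MGZ, div_sub' (hη.trans_le hD).ne', abs_div, abs_of_pos (hη.trans_le hD), mul_comm D]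
  calc _ ≤ S / D := div_le_div_of_nonneg_right hnum (hη.le.trans hD)
    _ ≤ S / η := by gcongr

end Kernel

theorem stmt10_general (χ : ℝ → ℝ) (hχ0 : ∀ u : ℝ, 0 ≤ χ u)
    (m0 m2 : ℝ)
    (hm0 : ∀ u > (0:ℝ), ∀ k : ℤ, |χ (Real.exp (-(k:ℝ)) * u)| ≤ m0)
    (hm2 : ∀ u > (0:ℝ), ∀ k : ℤ,
      |χ (Real.exp (-(k:ℝ)) * u)| * |(k:ℝ) - Real.log u| ^ 2 ≤ m2)
    (η : ℝ) (hη : 0 < η) (hinf : ∀ x ∈ Set.Icc (1:ℝ) (Real.exp 1), η ≤ χ x)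
    (f : ℝ → ℝ) (hf0 : ∀ y > (0:ℝ), 0 ≤ f y) (Bf : ℝ) (hfb : ∀ y > (0:ℝ), f y ≤ Bf)
    (x : ℝ) (hx : 0 < x)
    (hcont : ∀ ε > (0:ℝ), ∃ δ > (0:ℝ), ∀ y > (0:ℝ),
      |Real.log y - Real.log x| ≤ δ → |f y - f x| < ε) :
    Filter.Tendsto (fun w => MGZ χ f w x) Filter.atTop (nhds (f x)) := by
  have hm0pos : 0 < m0 := hη.trans_le <| (hinf 1 ⟨le_rfl, one_le_exp zero_le_one⟩).trans <| by
    simpa using (le_abs_self _).trans (hm0 1 one_pos 0)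
  refine Metric.tendsto_nhds.2 fun ε hε => ?_
  obtain ⟨δ, hδ, hfδ⟩ := hcont (ε * η / (2 * m0)) (by positivity)
  have htail : Tendsto (fun w : ℝ => Bf * m2 / (δ * w) ^ 2) atTop (𝓝 0) :=
    tendsto_const_nhds.div_atTop <|
      (tendsto_pow_atTop two_ne_zero).comp (tendsto_id.const_mul_atTop hδ)
  filter_upwards [eventually_gt_atTop 0, htail.eventually (gt_mem_nhds (half_pos (mul_pos hε hη)))]
    with w hw hsmall
  rw [Real.dist_eq]
  calc |MGZ χ f w x - f x| ≤ (m0 * (ε * η / (2 * m0)) + Bf * m2 / (δ * w) ^ 2) / η :=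
        abs_MGZ_sub_le hχ0 hm0 hη hinf hx (hf0 x hx)
          (kernel_mul_abs_sub_le hχ0 hm0 hm2 hf0 hfb hx (by positivity) hδ hfδ hw)
    _ < (ε * η / 2 + ε * η / 2) / η := by
        rw [show m0 * (ε * η / (2 * m0)) = ε * η / 2 by field_simp]
        gcongr
    _ = ε := by field_simp; ring

/-- pointwise convergence at each log-continuity point. -/
theorem stmt10 (χ : ℝ → ℝ) (hχ0 : ∀ u : ℝ, 0 ≤ χ u)
    (m0 m1 m2 : ℝ)
    (hm0 : ∀ u > (0:ℝ), ∀ k : ℤ, |χ (Real.exp (-(k:ℝ)) * u)| ≤ m0)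
    (hm1 : ∀ u > (0:ℝ), ∀ k : ℤ,
      |χ (Real.exp (-(k:ℝ)) * u)| * |(k:ℝ) - Real.log u| ≤ m1)
    (hm2 : ∀ u > (0:ℝ), ∀ k : ℤ,
      |χ (Real.exp (-(k:ℝ)) * u)| * |(k:ℝ) - Real.log u| ^ 2 ≤ m2)
    (η : ℝ) (hη : 0 < η) (hinf : ∀ x ∈ Set.Icc (1:ℝ) (Real.exp 1), η ≤ χ x)
    (f : ℝ → ℝ) (hf0 : ∀ y > (0:ℝ), 0 ≤ f y) (Bf : ℝ) (hfb : ∀ y > (0:ℝ), f y ≤ Bf)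
    (x : ℝ) (hx : 0 < x)
    (hcont : ∀ ε > (0:ℝ), ∃ δ > (0:ℝ), ∀ y > (0:ℝ),
      |Real.log y - Real.log x| ≤ δ → |f y - f x| < ε) :
    Filter.Tendsto (fun w => MGZ χ f w x) Filter.atTop (nhds (f x)) :=
  stmt10_general χ hχ0 m0 m2 hm0 hm2 η hη hinf f hf0 Bf hfb x hx hcont
end

section
/- Let χ be a nonnegative kernel with m_2(χ) < ∞ and η := inf_{[1,e]} χ > 0. If f is nonnegative and ω̄ f is log-uniformly continuous and bounded, where ω̄(x) = 1/(1+log²x), then lim_{w→∞} ‖MG_w^χ f − f‖_ω̄ = 0, where ‖g‖_ω̄ = sup_{x>0} ω̄(x)|g(x)|. -/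
set_option maxHeartbeats 1000000 in
/-- convergence in the weighted norm for nonnegative, bounded,
log-uniformly continuous functions in the weighted sense. -/
theorem stmt11 (χ : ℝ → ℝ) (hχ0 : ∀ u : ℝ, 0 ≤ χ u)
    (m0 m1 m2 : ℝ)
    (hm0 : ∀ u > (0:ℝ), ∀ k : ℤ, |χ (Real.exp (-(k:ℝ)) * u)| ≤ m0)
    (hm1 : ∀ u > (0:ℝ), ∀ k : ℤ,
      |χ (Real.exp (-(k:ℝ)) * u)| * |(k:ℝ) - Real.log u| ≤ m1)
    (hm2 : ∀ u > (0:ℝ), ∀ k : ℤ,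
      |χ (Real.exp (-(k:ℝ)) * u)| * |(k:ℝ) - Real.log u| ^ 2 ≤ m2)
    (η : ℝ) (hη : 0 < η) (hinf : ∀ x ∈ Set.Icc (1:ℝ) (Real.exp 1), η ≤ χ x)
    (f : ℝ → ℝ) (hf0 : ∀ y > (0:ℝ), 0 ≤ f y)
    (hbdd : ∃ M : ℝ, ∀ y > (0:ℝ), |f y| / (1 + Real.log y ^ 2) ≤ M)
    (hluc : ∀ ε > (0:ℝ), ∃ δ > (0:ℝ), ∀ x > (0:ℝ), ∀ y > (0:ℝ),
      |Real.log x - Real.log y| ≤ δ →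
      |f x / (1 + Real.log x ^ 2) - f y / (1 + Real.log y ^ 2)| < ε) :
    ∀ ε > (0:ℝ), ∃ W : ℝ, ∀ w ≥ W, ∀ x > (0:ℝ),
      |MGZ χ f w x - f x| / (1 + Real.log x ^ 2) < ε := by
  intro ε hε
  obtain ⟨M, hM⟩ := hbdd
  have hM0 : 0 ≤ M := le_trans (by positivity) (hM 1 one_pos)
  -- basic facts about the constants
  have hχ1 : η ≤ χ 1 := hinf 1 ⟨le_refl _, Real.one_le_exp (by norm_num)⟩
  have hm0η : η ≤ m0 := by
    have h := hm0 1 one_pos 0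
    simp only [Int.cast_zero, neg_zero, Real.exp_zero, one_mul] at h
    calc η ≤ χ 1 := hχ1
    _ ≤ |χ 1| := le_abs_self _
    _ ≤ m0 := h
  have hm0pos : 0 < m0 := lt_of_lt_of_le hη hm0η
  have hm1nn : 0 ≤ m1 := le_trans (by positivity) (hm1 1 one_pos 0)
  have hm2nn : 0 ≤ m2 := le_trans (by positivity) (hm2 1 one_pos 0)
  -- uniform continuity parameter
  have hε' : 0 < ε * η / (4 * m0) := by positivity
  obtain ⟨δ, hδ, hδf⟩ := hluc (ε * η / (4 * m0)) hε'
  obtain ⟨A, hAdef⟩ : ∃ A : ℝ, A = 2 * M * m2 / δ ^ 2 + M * m2 + M * m1 := ⟨_, rfl⟩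
  have hA0 : 0 ≤ A := by rw [hAdef]; positivity
  refine ⟨max 1 (4 * (A + 1) / (ε * η)), fun w hw x hx => ?_⟩
  have hw1 : (1:ℝ) ≤ w := le_trans (le_max_left _ _) hw
  have hw0 : (0:ℝ) < w := lt_of_lt_of_le one_pos hw1
  have hεη : 0 < ε * η := mul_pos hε hη
  have hwA : A / w < ε * η / 4 := by
    have h2 : 4 * (A + 1) / (ε * η) ≤ w := le_trans (le_max_right _ _) hw
    have h3 : 4 * (A + 1) ≤ w * (ε * η) := (div_le_iff₀ hεη).mp h2
    rw [div_lt_iff₀ hw0]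
    calc A < A + 1 := by linarith
      _ ≤ w * (ε * η) / 4 := by linarith
      _ = ε * η / 4 * w := by ring
  obtain ⟨B, hBdef⟩ : ∃ B : ℝ, B = ε * η / 4 + A / w := ⟨_, rfl⟩
  have hB0 : 0 ≤ B := by rw [hBdef]; positivity
  have hBεη : B < ε * η / 2 := by rw [hBdef]; linarith
  have hu : (0:ℝ) < x ^ w := Real.rpow_pos_of_pos hx w
  have hlogu : Real.log (x ^ w) = w * Real.log x := Real.log_rpow hx w
  obtain ⟨P, hPdef⟩ : ∃ P : ℝ, P = 1 + Real.log x ^ 2 := ⟨_, rfl⟩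
  have hP : (0:ℝ) < P := by rw [hPdef]; positivity
  have hP1 : (1:ℝ) ≤ P := by rw [hPdef]; linarith [sq_nonneg (Real.log x)]
  -- kernel bounds
  have hG0 : ∀ k : ℤ, 0 ≤ χ (Real.exp (-(k:ℝ)) * x ^ w) := fun k => hχ0 _
  have hGm0 : ∀ k : ℤ, χ (Real.exp (-(k:ℝ)) * x ^ w) ≤ m0 := fun k => by
    have h := hm0 (x ^ w) hu k; rwa [abs_of_nonneg (hG0 k)] at h
  have hGm1 : ∀ k : ℤ, χ (Real.exp (-(k:ℝ)) * x ^ w) * |(k:ℝ) - w * Real.log x| ≤ m1 := fun k => by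
    have h := hm1 (x ^ w) hu k
    rwa [abs_of_nonneg (hG0 k), hlogu] at h
  have hGm2 : ∀ k : ℤ, χ (Real.exp (-(k:ℝ)) * x ^ w) * ((k:ℝ) - w * Real.log x) ^ 2 ≤ m2 :=
    fun k => by
    have h := hm2 (x ^ w) hu k
    rwa [abs_of_nonneg (hG0 k), hlogu, sq_abs] at h
  have hfx0 : 0 ≤ f x := hf0 x hx
  have hFb : ∀ y > (0:ℝ), |f y / (1 + Real.log y ^ 2)| ≤ M := fun y hy => by
    have h1 : (0:ℝ) < 1 + Real.log y ^ 2 := by positivity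
    rw [abs_div, abs_of_pos h1]; exact hM y hy
  -- the key pointwise estimate
  have key : ∀ k : ℤ, χ (Real.exp (-(k:ℝ)) * x ^ w) * |f (Real.exp ((k:ℝ) / w)) - f x|
      ≤ B * P := by
    intro k
    obtain ⟨G, hGdef⟩ : ∃ G : ℝ, G = χ (Real.exp (-(k:ℝ)) * x ^ w) := ⟨_, rfl⟩
    obtain ⟨t, htdef⟩ : ∃ t : ℝ, t = (k:ℝ) / w - Real.log x := ⟨_, rfl⟩
    have hG0k : 0 ≤ G := hGdef ▸ hG0 k
    have hkt : (k:ℝ) - w * Real.log x = w * t := by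
      rw [htdef]; field_simp
    have hxk : (0:ℝ) < Real.exp ((k:ℝ) / w) := Real.exp_pos _
    have hlxk : Real.log (Real.exp ((k:ℝ) / w)) = (k:ℝ) / w := Real.log_exp _
    obtain ⟨Fk, hFkdef⟩ : ∃ Fk : ℝ,
        Fk = f (Real.exp ((k:ℝ) / w)) / (1 + Real.log (Real.exp ((k:ℝ) / w)) ^ 2) := ⟨_, rfl⟩
    obtain ⟨Fx, hFxdef⟩ : ∃ Fx : ℝ, Fx = f x / (1 + Real.log x ^ 2) := ⟨_, rfl⟩
    have hQk : (0:ℝ) < 1 + ((k:ℝ)/w) ^ 2 := by positivity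
    have hfk : f (Real.exp ((k:ℝ) / w)) = Fk * (1 + ((k:ℝ)/w) ^ 2) := by
      rw [hFkdef, hlxk]; field_simp
    have hfxe : f x = Fx * P := by rw [hFxdef, hPdef]; field_simp
    have hFkM : |Fk| ≤ M := hFkdef ▸ hFb _ hxk
    have hFxM : |Fx| ≤ M := hFxdef ▸ hFb _ hx
    have hid : f (Real.exp ((k:ℝ) / w)) - f x
        = (Fk - Fx) * P + Fk * (((k:ℝ)/w) ^ 2 - Real.log x ^ 2) := by
      rw [hfk, hfxe, hPdef]; ring
    -- bound the abs of each piece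
    have habs : |f (Real.exp ((k:ℝ) / w)) - f x|
        ≤ |Fk - Fx| * P + |Fk| * |((k:ℝ)/w) ^ 2 - Real.log x ^ 2| := by
      rw [hid]
      calc |(Fk - Fx) * P + Fk * (((k:ℝ)/w) ^ 2 - Real.log x ^ 2)|
          ≤ |(Fk - Fx) * P| + |Fk * (((k:ℝ)/w) ^ 2 - Real.log x ^ 2)| := abs_add_le _ _
        _ = |Fk - Fx| * P + |Fk| * |((k:ℝ)/w) ^ 2 - Real.log x ^ 2| := by
            rw [abs_mul, abs_mul, abs_of_pos hP]
    have hG2 : G * (w * t) ^ 2 ≤ m2 := by rw [← hkt, hGdef]; exact hGm2 k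
    have hww : w ≤ w ^ 2 := by
      calc w = w * 1 := (mul_one w).symm
        _ ≤ w * w := mul_le_mul_of_nonneg_left hw1 hw0.le
        _ = w ^ 2 := (sq w).symm
    -- piece 1
    have h1 : G * (|Fk - Fx| * P) ≤ (ε * η / 4 + (2 * M * m2 / δ ^ 2) / w) * P := by
      have hc : G * |Fk - Fx| ≤ ε * η / 4 + (2 * M * m2 / δ ^ 2) / w := by
        rcases le_or_gt |t| δ with hcase | hcase
        · have hlog : |Real.log (Real.exp ((k:ℝ)/w)) - Real.log x| ≤ δ := by
            rw [hlxk, ← htdef]; exact hcase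
          have hd := hδf _ hxk x hx hlog
          rw [← hFkdef, ← hFxdef] at hd
          have h5 : G * |Fk - Fx| ≤ m0 * (ε * η / (4 * m0)) := by
            refine mul_le_mul ?_ hd.le (abs_nonneg _) hm0pos.le
            rw [hGdef]; exact hGm0 k
          have h6 : m0 * (ε * η / (4 * m0)) = ε * η / 4 := by
            field_simp
          have h7 : 0 ≤ (2 * M * m2 / δ ^ 2) / w := by positivity
          linarith [h5.trans_eq h6]
        · have h2M : |Fk - Fx| ≤ 2 * M := by
            calc |Fk - Fx| ≤ |Fk| + |Fx| := abs_sub _ _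
              _ ≤ 2 * M := by linarith
          have hδ2t : δ ^ 2 < t ^ 2 := by
            have h := pow_lt_pow_left₀ hcase hδ.le (two_ne_zero)
            rwa [sq_abs] at h
          have hGδ : G * (δ ^ 2 * w) ≤ m2 := by
            have s1 : G * δ ^ 2 ≤ G * t ^ 2 := mul_le_mul_of_nonneg_left hδ2t.le hG0k
            have s2 : G * t ^ 2 * w ≤ G * t ^ 2 * w ^ 2 :=
              mul_le_mul_of_nonneg_left hww (mul_nonneg hG0k (sq_nonneg t))
            calc G * (δ ^ 2 * w) = (G * δ ^ 2) * w := by ring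
              _ ≤ (G * t ^ 2) * w := mul_le_mul_of_nonneg_right s1 hw0.le
              _ ≤ G * t ^ 2 * w ^ 2 := s2
              _ = G * (w * t) ^ 2 := by ring
              _ ≤ m2 := hG2
          have hGle : G ≤ m2 / (δ ^ 2 * w) := by
            rw [le_div_iff₀ (by positivity)]; linarith
          have h8 : 0 ≤ ε * η / 4 := by positivity
          calc G * |Fk - Fx| ≤ (m2 / (δ ^ 2 * w)) * (2 * M) :=
                mul_le_mul hGle h2M (abs_nonneg _) (by positivity)
            _ = (2 * M * m2 / δ ^ 2) / w := by ring
            _ ≤ ε * η / 4 + (2 * M * m2 / δ ^ 2) / w := by linarith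
      calc G * (|Fk - Fx| * P) = (G * |Fk - Fx|) * P := by ring
        _ ≤ (ε * η / 4 + (2 * M * m2 / δ ^ 2) / w) * P :=
            mul_le_mul_of_nonneg_right hc hP.le
    -- piece 2
    have hGt2 : G * t ^ 2 ≤ m2 / w := by
      rw [le_div_iff₀ hw0]
      have s2 : G * t ^ 2 * w ≤ G * t ^ 2 * w ^ 2 :=
        mul_le_mul_of_nonneg_left hww (mul_nonneg hG0k (sq_nonneg t))
      calc G * t ^ 2 * w ≤ G * t ^ 2 * w ^ 2 := s2
        _ = G * (w * t) ^ 2 := by ring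
        _ ≤ m2 := hG2
    have hGt1 : G * |t| ≤ m1 / w := by
      have hG1 : G * |w * t| ≤ m1 := by rw [← hkt, hGdef]; exact hGm1 k
      rw [abs_mul, abs_of_pos hw0] at hG1
      rw [le_div_iff₀ hw0]
      calc G * |t| * w = G * (w * |t|) := by ring
        _ ≤ m1 := hG1
    have hdiffb : |((k:ℝ)/w) ^ 2 - Real.log x ^ 2| ≤ (t ^ 2 + |t|) * P := by
      have he : ((k:ℝ)/w) ^ 2 - Real.log x ^ 2 = t * (t + 2 * Real.log x) := by
        rw [htdef]; ring
      rw [he, abs_mul]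
      have h2L : 2 * |Real.log x| ≤ P := by
        have e := sq_nonneg (|Real.log x| - 1)
        rw [sub_sq, sq_abs, one_pow, mul_one] at e
        rw [hPdef]; linarith
      have h8 : |t + 2 * Real.log x| ≤ |t| + 2 * |Real.log x| := by
        calc |t + 2 * Real.log x| ≤ |t| + |2 * Real.log x| := abs_add_le _ _
          _ = |t| + 2 * |Real.log x| := by rw [abs_mul]; norm_num
      have h9 : |t| * |t + 2 * Real.log x| ≤ |t| * (|t| + P) := by
        apply mul_le_mul_of_nonneg_left _ (abs_nonneg t)
        linarith
      calc |t| * |t + 2 * Real.log x| ≤ |t| * (|t| + P) := h9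
        _ = |t| * |t| + |t| * P := by ring
        _ ≤ t ^ 2 * P + |t| * P := by
            have e1 : |t| * |t| = t ^ 2 := by rw [← sq_abs t, sq]
            have e2 : t ^ 2 ≤ t ^ 2 * P := le_mul_of_one_le_right (sq_nonneg t) hP1
            linarith
        _ = (t ^ 2 + |t|) * P := by ring
    have h2 : G * (|Fk| * |((k:ℝ)/w) ^ 2 - Real.log x ^ 2|)
        ≤ ((M * m2 + M * m1) / w) * P := by
      have h10 : |Fk| * |((k:ℝ)/w) ^ 2 - Real.log x ^ 2| ≤ M * ((t ^ 2 + |t|) * P) :=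
        mul_le_mul hFkM hdiffb (abs_nonneg _) hM0
      have h11 : G * (|Fk| * |((k:ℝ)/w) ^ 2 - Real.log x ^ 2|)
          ≤ G * (M * ((t ^ 2 + |t|) * P)) :=
        mul_le_mul_of_nonneg_left h10 hG0k
      have h12 : G * (M * ((t ^ 2 + |t|) * P)) = (M * P) * (G * t ^ 2 + G * |t|) := by ring
      have h13 : (M * P) * (G * t ^ 2 + G * |t|) ≤ (M * P) * (m2 / w + m1 / w) :=
        mul_le_mul_of_nonneg_left (add_le_add hGt2 hGt1) (by positivity)
      calc G * (|Fk| * |((k:ℝ)/w) ^ 2 - Real.log x ^ 2|)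
          ≤ (M * P) * (m2 / w + m1 / w) := by rw [h12] at h11; linarith
        _ = ((M * m2 + M * m1) / w) * P := by ring
    -- combine
    have hcomb : G * |f (Real.exp ((k:ℝ) / w)) - f x|
        ≤ G * (|Fk - Fx| * P) + G * (|Fk| * |((k:ℝ)/w) ^ 2 - Real.log x ^ 2|) := by
      have h14 := mul_le_mul_of_nonneg_left habs hG0k
      linarith [h14]
    rw [← hGdef]
    calc G * |f (Real.exp ((k:ℝ) / w)) - f x|
        ≤ (ε * η / 4 + (2 * M * m2 / δ ^ 2) / w) * P + ((M * m2 + M * m1) / w) * P := by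
          linarith [hcomb, h1, h2]
      _ = B * P := by rw [hBdef, hAdef]; ring
  -- supremum bounds
  have hbddG : BddAbove (Set.range fun k : ℤ => χ (Real.exp (-(k:ℝ)) * x ^ w)) := by
    refine ⟨m0, ?_⟩; rintro y ⟨k, rfl⟩; exact hGm0 k
  obtain ⟨D, hDdef⟩ : ∃ D : ℝ, D = ⨆ k : ℤ, χ (Real.exp (-(k:ℝ)) * x ^ w) := ⟨_, rfl⟩
  have hGleD : ∀ k : ℤ, χ (Real.exp (-(k:ℝ)) * x ^ w) ≤ D := fun k =>
    hDdef ▸ le_ciSup hbddG k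
  have hDη : η ≤ D := by
    have hfl : ((⌊Real.log (x ^ w)⌋ : ℤ) : ℝ) ≤ Real.log (x ^ w) := Int.floor_le _
    have hfl2 : Real.log (x ^ w) < ((⌊Real.log (x ^ w)⌋ : ℤ) : ℝ) + 1 := Int.lt_floor_add_one _
    have he1 : Real.exp (-((⌊Real.log (x ^ w)⌋ : ℤ) : ℝ)) * x ^ w
        = Real.exp (Real.log (x ^ w) - ((⌊Real.log (x ^ w)⌋ : ℤ) : ℝ)) := by
      rw [Real.exp_sub, Real.exp_log hu, Real.exp_neg]; ring
    have hmem : Real.exp (Real.log (x ^ w) - ((⌊Real.log (x ^ w)⌋ : ℤ) : ℝ))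
        ∈ Set.Icc (1:ℝ) (Real.exp 1) :=
      ⟨Real.one_le_exp (by linarith), Real.exp_le_exp.mpr (by linarith)⟩
    have h15 : η ≤ χ (Real.exp (-((⌊Real.log (x ^ w)⌋ : ℤ) : ℝ)) * x ^ w) := by
      rw [he1]; exact hinf _ hmem
    exact le_trans h15 (hGleD _)
  have hD0 : 0 < D := lt_of_lt_of_le hη hDη
  have hfk0 : ∀ k : ℤ, 0 ≤ f (Real.exp ((k:ℝ) / w)) := fun k => hf0 _ (Real.exp_pos _)
  -- numerator bounds
  have hterm : ∀ k : ℤ, χ (Real.exp (-(k:ℝ)) * x ^ w) * f (Real.exp ((k:ℝ) / w))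
      ≤ m0 * f x + B * P := by
    intro k
    have e1 : χ (Real.exp (-(k:ℝ)) * x ^ w) * (f (Real.exp ((k:ℝ) / w)) - f x) ≤ B * P :=
      le_trans (mul_le_mul_of_nonneg_left (le_abs_self _) (hG0 k)) (key k)
    have e2 : χ (Real.exp (-(k:ℝ)) * x ^ w) * f x ≤ m0 * f x :=
      mul_le_mul_of_nonneg_right (hGm0 k) hfx0
    have e3 : χ (Real.exp (-(k:ℝ)) * x ^ w) * f (Real.exp ((k:ℝ) / w))
        = χ (Real.exp (-(k:ℝ)) * x ^ w) * f x
          + χ (Real.exp (-(k:ℝ)) * x ^ w) * (f (Real.exp ((k:ℝ) / w)) - f x) := by ring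
    linarith [e3.le]
  have hbddN : BddAbove (Set.range fun k : ℤ =>
      χ (Real.exp (-(k:ℝ)) * x ^ w) * f (Real.exp ((k:ℝ) / w))) := by
    refine ⟨m0 * f x + B * P, ?_⟩; rintro y ⟨k, rfl⟩; exact hterm k
  obtain ⟨N, hNdef⟩ : ∃ N : ℝ,
      N = ⨆ k : ℤ, χ (Real.exp (-(k:ℝ)) * x ^ w) * f (Real.exp ((k:ℝ) / w)) := ⟨_, rfl⟩
  have hNle : N ≤ f x * D + B * P := by
    rw [hNdef]
    apply ciSup_le
    intro k
    have e1 : χ (Real.exp (-(k:ℝ)) * x ^ w) * (f (Real.exp ((k:ℝ) / w)) - f x) ≤ B * P :=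
      le_trans (mul_le_mul_of_nonneg_left (le_abs_self _) (hG0 k)) (key k)
    have e2 : f x * χ (Real.exp (-(k:ℝ)) * x ^ w) ≤ f x * D :=
      mul_le_mul_of_nonneg_left (hGleD k) hfx0
    have e3 : χ (Real.exp (-(k:ℝ)) * x ^ w) * f (Real.exp ((k:ℝ) / w))
        = f x * χ (Real.exp (-(k:ℝ)) * x ^ w)
          + χ (Real.exp (-(k:ℝ)) * x ^ w) * (f (Real.exp ((k:ℝ) / w)) - f x) := by ring
    linarith [e3.le]
  have hNge : f x * D ≤ N + B * P := by
    rw [hDdef, Real.mul_iSup_of_nonneg hfx0]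
    apply ciSup_le
    intro k
    have e1 : χ (Real.exp (-(k:ℝ)) * x ^ w) * (f x - f (Real.exp ((k:ℝ) / w))) ≤ B * P := by
      refine le_trans (mul_le_mul_of_nonneg_left (le_abs_self _) (hG0 k)) ?_
      rw [abs_sub_comm]; exact key k
    have e2 : χ (Real.exp (-(k:ℝ)) * x ^ w) * f (Real.exp ((k:ℝ) / w)) ≤ N :=
      hNdef ▸ le_ciSup hbddN k
    have e3 : f x * χ (Real.exp (-(k:ℝ)) * x ^ w)
        = χ (Real.exp (-(k:ℝ)) * x ^ w) * f (Real.exp ((k:ℝ) / w))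
          + χ (Real.exp (-(k:ℝ)) * x ^ w) * (f x - f (Real.exp ((k:ℝ) / w))) := by ring
    linarith [e3.le]
  -- conclude
  have habsND : |N - f x * D| ≤ B * P := abs_le.mpr ⟨by linarith, by linarith⟩
  have hMGZeq : MGZ χ f w x = N / D := by rw [MGZ, ← hNdef, ← hDdef]
  have hdiff : |MGZ χ f w x - f x| ≤ B * P / η := by
    rw [hMGZeq]
    have heq : N / D - f x = (N - f x * D) / D := by field_simp
    rw [heq, abs_div, abs_of_pos hD0]
    exact div_le_div₀ (by positivity) habsND hη hDη
  have hfin : |MGZ χ f w x - f x| / P ≤ B / η := by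
    rw [div_le_iff₀ hP]
    calc |MGZ χ f w x - f x| ≤ B * P / η := hdiff
      _ = B / η * P := by ring
  have hlast : B / η < ε := by
    rw [div_lt_iff₀ hη]
    calc B < ε * η / 2 := hBεη
      _ ≤ ε * η := by linarith
      _ = ε * η := rfl
  calc |MGZ χ f w x - f x| / (1 + Real.log x ^ 2) = |MGZ χ f w x - f x| / P := by rw [hPdef]
    _ ≤ B / η := hfin
    _ < ε := hlast
end

section
/- Let f : ℝ⁺ → ℝ have weighted logarithmic modulus of continuity Ω(f, δ). Then for all h, x > 0 and all δ ∈ (0, 1], |f(h) − f(x)| ≤ 16 (1 + δ²)² (1 + log² x) (1 + |log h − log x|⁵/δ⁵) · Ω(f, δ). -/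
set_option maxHeartbeats 1000000

lemma poly_aux (a δ : ℝ) (ha : 0 < a) (hδ : 0 < δ) (hδ1 : δ ≤ 1) :
    (a * δ ^ 4 + δ ^ 5) * (1 + a ^ 2) ≤ 8 * (δ ^ 5 + a ^ 5) := by
  rcases le_total a δ with hle | hle
  · have h1 : a * δ ^ 4 ≤ δ ^ 5 := by nlinarith [pow_pos hδ 4]
    have h2 : a ^ 3 * δ ^ 4 ≤ δ ^ 7 := by
      have := pow_le_pow_left₀ ha.le hle 3
      nlinarith [pow_pos hδ 4]
    have h3 : a ^ 2 * δ ^ 5 ≤ δ ^ 7 := by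
      have := pow_le_pow_left₀ ha.le hle 2
      nlinarith [pow_pos hδ 5]
    have h4 : δ ^ 7 ≤ δ ^ 5 := pow_le_pow_of_le_one hδ.le hδ1 (by norm_num)
    have h5 : (0:ℝ) ≤ a ^ 5 := by positivity
    have h6 : (0:ℝ) < δ ^ 5 := by positivity
    nlinarith
  · have h1 : a * δ ^ 4 ≤ a ^ 5 := by
      have := pow_le_pow_left₀ hδ.le hle 4
      nlinarith
    have h2 : a ^ 3 * δ ^ 4 ≤ a ^ 3 * δ ^ 2 :=
      mul_le_mul_of_nonneg_left (pow_le_pow_of_le_one hδ.le hδ1 (by norm_num))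
        (by positivity)
    have h2' : a ^ 3 * δ ^ 2 ≤ a ^ 5 := by
      have := pow_le_pow_left₀ hδ.le hle 2
      nlinarith [pow_pos ha 3]
    have h3 : a ^ 2 * δ ^ 5 ≤ a ^ 2 * δ ^ 3 :=
      mul_le_mul_of_nonneg_left (pow_le_pow_of_le_one hδ.le hδ1 (by norm_num))
        (by positivity)
    have h3' : a ^ 2 * δ ^ 3 ≤ a ^ 5 := by
      have := pow_le_pow_left₀ hδ.le hle 3
      nlinarith [pow_pos ha 2]
    have h5 : (0:ℝ) ≤ δ ^ 5 := by positivity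
    nlinarith

lemma arith_aux (L a δ N : ℝ) (ha : 0 < a) (hδ : 0 < δ) (hδ1 : δ ≤ 1) (hN0 : 0 ≤ N)
    (hN : N ≤ a / δ + 1) :
    N * (2 * (1 + L ^ 2) * (1 + a ^ 2) * (1 + δ ^ 2)) ≤
      16 * (1 + δ ^ 2) ^ 2 * (1 + L ^ 2) * (1 + a ^ 5 / δ ^ 5) := by
  have hd5 : (0:ℝ) < δ ^ 5 := by positivity
  have h8 : (a / δ + 1) * (1 + a ^ 2) ≤ 8 * (1 + a ^ 5 / δ ^ 5) := by
    have key := poly_aux a δ ha hδ hδ1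
    have e1 : (a / δ + 1) * (1 + a ^ 2) = ((a * δ ^ 4 + δ ^ 5) * (1 + a ^ 2)) / δ ^ 5 := by
      field_simp
    have e2 : 8 * (1 + a ^ 5 / δ ^ 5) = (8 * (δ ^ 5 + a ^ 5)) / δ ^ 5 := by
      field_simp
    rw [e1, e2]
    gcongr
  have hNd : 0 ≤ a / δ + 1 := by positivity
  have ha2 : (0:ℝ) ≤ 1 + a^2 := by positivity
  calc N * (2 * (1 + L ^ 2) * (1 + a ^ 2) * (1 + δ ^ 2))
      = (N * (1 + a ^ 2)) * (2 * (1 + L ^ 2) * (1 + δ ^ 2)) := by ring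
    _ ≤ ((a / δ + 1) * (1 + a ^ 2)) * (2 * (1 + L ^ 2) * (1 + δ ^ 2)) := by gcongr
    _ ≤ (8 * (1 + a ^ 5 / δ ^ 5)) * (2 * (1 + L ^ 2) * (1 + δ ^ 2)) := by
        apply mul_le_mul_of_nonneg_right h8; positivity
    _ ≤ (8 * (1 + a ^ 5 / δ ^ 5)) * (2 * (1 + L ^ 2) * ((1 + δ ^ 2) * (1 + δ ^ 2))) := by
        have h1 : (1:ℝ) + δ ^ 2 ≤ (1 + δ ^ 2) * (1 + δ ^ 2) := by nlinarith [sq_nonneg δ]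
        gcongr
    _ = 16 * (1 + δ ^ 2) ^ 2 * (1 + L ^ 2) * (1 + a ^ 5 / δ ^ 5) := by ring

/-- Weighted logarithmic modulus of continuity. -/
noncomputable def Omeg (f : ℝ → ℝ) (δ : ℝ) : ℝ :=
  ⨆ p : {p : ℝ × ℝ // 0 < p.1 ∧ 0 < p.2 ∧ |Real.log p.1| ≤ δ},
    |f (p.1.1 * p.1.2) - f p.1.2| /
      ((1 + Real.log p.1.2 ^ 2) * (1 + Real.log p.1.1 ^ 2))

/-- the increment inequality via the weighted modulus. -/
theorem stmt13 (f : ℝ → ℝ)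
    (hfin : ∀ δ > (0:ℝ), ∃ C : ℝ, ∀ t > (0:ℝ), ∀ x > (0:ℝ), |Real.log t| ≤ δ →
      |f (t * x) - f x| / ((1 + Real.log x ^ 2) * (1 + Real.log t ^ 2)) ≤ C) :
    ∀ h > (0:ℝ), ∀ x > (0:ℝ), ∀ δ : ℝ, 0 < δ → δ ≤ 1 →
      |f h - f x| ≤ 16 * (1 + δ ^ 2) ^ 2 * (1 + Real.log x ^ 2) *
        (1 + |Real.log h - Real.log x| ^ 5 / δ ^ 5) * Omeg f δ := by
  intro h hh x hx δ hδ hδ1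
  have hΩ0 : 0 ≤ Omeg f δ := by
    apply Real.iSup_nonneg
    intro p
    positivity
  obtain ⟨C, hC⟩ := hfin δ hδ
  have hbdd : BddAbove (Set.range fun p : {p : ℝ × ℝ // 0 < p.1 ∧ 0 < p.2 ∧ |Real.log p.1| ≤ δ} =>
      |f (p.1.1 * p.1.2) - f p.1.2| /
        ((1 + Real.log p.1.2 ^ 2) * (1 + Real.log p.1.1 ^ 2))) := by
    refine ⟨C, ?_⟩
    rintro y ⟨⟨⟨t, z⟩, ht, hz, hlog⟩, rfl⟩
    exact hC t ht z hz hlog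
  have hstep : ∀ t > (0:ℝ), ∀ y > (0:ℝ), |Real.log t| ≤ δ →
      |f (t * y) - f y| ≤ Omeg f δ * ((1 + Real.log y ^ 2) * (1 + Real.log t ^ 2)) := by
    intro t ht y hy hlt
    have hpos : (0:ℝ) < (1 + Real.log y ^ 2) * (1 + Real.log t ^ 2) := by positivity
    have := le_ciSup hbdd ⟨(t, y), ht, hy, hlt⟩
    exact (div_le_iff₀ hpos).mp this
  set u := Real.log h - Real.log x with hu
  by_cases hu0 : u = 0
  · have hhx : h = x := by
      have : Real.log h = Real.log x := by linarith [sub_eq_zero.mp hu0]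
      calc h = Real.exp (Real.log h) := (Real.exp_log hh).symm
        _ = Real.exp (Real.log x) := by rw [this]
        _ = x := Real.exp_log hx
    rw [hhx, sub_self, abs_zero]
    apply mul_nonneg _ hΩ0
    positivity
  · set a := |u| with ha
    have ha0 : 0 < a := abs_pos.mpr hu0
    set n := ⌈a / δ⌉₊ with hn
    have hn1 : 1 ≤ n := Nat.one_le_iff_ne_zero.mpr (by
      simp only [hn, ne_eq, Nat.ceil_eq_zero, not_le]
      positivity)
    have hnpos : (0:ℝ) < n := by exact_mod_cast hn1
    have hceil : a / δ ≤ (n:ℝ) := Nat.le_ceil _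
    have hstepsize : a / n ≤ δ := by
      rw [div_le_iff₀ hnpos]
      calc a = (a / δ) * δ := by field_simp
        _ ≤ (n:ℝ) * δ := by gcongr
        _ = δ * n := by ring
    have hun : |u / n| ≤ δ := by
      rw [abs_div, abs_of_pos hnpos]
      exact hstepsize
    set g : ℕ → ℝ := fun k => f (x * Real.exp (k * (u / n))) with hg
    have hg0 : g 0 = f x := by simp [hg]
    have hgn : g n = f h := by
      have h1 : (n:ℝ) * (u / n) = u := by field_simp
      have h2 : Real.exp u = h / x := by
        rw [hu, Real.exp_sub, Real.exp_log hh, Real.exp_log hx]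
      simp only [hg, h1, h2]
      rw [mul_div_cancel₀ _ (ne_of_gt hx)]
    -- per-step bound
    have hterm : ∀ k < n, |g (k + 1) - g k| ≤
        Omeg f δ * (2 * (1 + Real.log x ^ 2) * (1 + a ^ 2) * (1 + δ ^ 2)) := by
      intro k hk
      have hyk : (0:ℝ) < x * Real.exp (k * (u / n)) := by positivity
      have hsplit : x * Real.exp ((k + 1 : ℕ) * (u / n)) =
          Real.exp (u / n) * (x * Real.exp (k * (u / n))) := by
        push_cast
        rw [add_mul, one_mul, Real.exp_add]
        ring
      have hlt : |Real.log (Real.exp (u / n))| ≤ δ := by rw [Real.log_exp]; exact hun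
      have := hstep (Real.exp (u / n)) (Real.exp_pos _) (x * Real.exp (k * (u / n))) hyk hlt
      rw [← hsplit] at this
      have hlogy : Real.log (x * Real.exp (k * (u / n))) = Real.log x + k * (u / n) := by
        rw [Real.log_mul (ne_of_gt hx) (ne_of_gt (Real.exp_pos _)), Real.log_exp]
      have hlogt : Real.log (Real.exp (u / n)) = u / n := Real.log_exp _
      rw [hlogy, hlogt] at this
      refine le_trans this ?_
      apply mul_le_mul_of_nonneg_left _ hΩ0
      -- (1 + (L + k(u/n))^2) * (1 + (u/n)^2) ≤ 2(1+L^2)(1+a^2)(1+δ^2)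
      have hkun : |(k:ℝ) * (u / n)| ≤ a := by
        rw [abs_mul, abs_div, abs_of_pos hnpos, Nat.abs_cast]
        have hkn : (k:ℝ) ≤ (n:ℝ) := by exact_mod_cast hk.le
        calc (k:ℝ) * (|u| / n) ≤ (n:ℝ) * (|u| / n) := by gcongr
          _ = |u| := by field_simp
          _ = a := rfl
      have hc := abs_le.mp hkun
      have h1 : 1 + (Real.log x + (k:ℝ) * (u / n)) ^ 2 ≤
          2 * (1 + Real.log x ^ 2) * (1 + a ^ 2) := by
        nlinarith [sq_nonneg (Real.log x - (k:ℝ) * (u / n)),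
          sq_nonneg (Real.log x * a), sq_nonneg ((k:ℝ) * (u / n))]
      have h2 : 1 + (u / n) ^ 2 ≤ 1 + δ ^ 2 := by
        have := abs_le.mp hun
        nlinarith
      calc (1 + (Real.log x + (k:ℝ) * (u / n)) ^ 2) * (1 + (u / n) ^ 2)
          ≤ (2 * (1 + Real.log x ^ 2) * (1 + a ^ 2)) * (1 + δ ^ 2) := by
            apply mul_le_mul h1 h2 (by positivity) (by positivity)
        _ = 2 * (1 + Real.log x ^ 2) * (1 + a ^ 2) * (1 + δ ^ 2) := by ring
    -- telescoping
    have htel : f h - f x = ∑ k ∈ Finset.range n, (g (k + 1) - g k) := by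
      rw [Finset.sum_range_sub g n, hg0, hgn]
    have hsum : |f h - f x| ≤
        (n:ℝ) * (Omeg f δ * (2 * (1 + Real.log x ^ 2) * (1 + a ^ 2) * (1 + δ ^ 2))) := by
      rw [htel]
      calc |∑ k ∈ Finset.range n, (g (k + 1) - g k)|
          ≤ ∑ k ∈ Finset.range n, |g (k + 1) - g k| := Finset.abs_sum_le_sum_abs _ _
        _ ≤ ∑ _k ∈ Finset.range n,
            Omeg f δ * (2 * (1 + Real.log x ^ 2) * (1 + a ^ 2) * (1 + δ ^ 2)) := by
            apply Finset.sum_le_sum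
            intro k hk
            exact hterm k (Finset.mem_range.mp hk)
        _ = (n:ℝ) * (Omeg f δ * (2 * (1 + Real.log x ^ 2) * (1 + a ^ 2) * (1 + δ ^ 2))) := by
            rw [Finset.sum_const, Finset.card_range]; push_cast; ring
    refine le_trans hsum ?_
    have hNle : (n:ℝ) ≤ a / δ + 1 := le_of_lt (Nat.ceil_lt_add_one (by positivity))
    have harith := arith_aux (Real.log x) a δ (n:ℝ) ha0 hδ hδ1 hnpos.le hNle
    calc (n:ℝ) * (Omeg f δ * (2 * (1 + Real.log x ^ 2) * (1 + a ^ 2) * (1 + δ ^ 2)))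
        = ((n:ℝ) * (2 * (1 + Real.log x ^ 2) * (1 + a ^ 2) * (1 + δ ^ 2))) * Omeg f δ := by
          ring
      _ ≤ (16 * (1 + δ ^ 2) ^ 2 * (1 + Real.log x ^ 2) * (1 + a ^ 5 / δ ^ 5)) * Omeg f δ :=
          mul_le_mul_of_nonneg_right harith hΩ0
      _ = 16 * (1 + δ ^ 2) ^ 2 * (1 + Real.log x ^ 2) *
          (1 + |Real.log h - Real.log x| ^ 5 / δ ^ 5) * Omeg f δ := by rw [← hu, ← ha]
end

section
/- Let f : ℝ⁺ → ℝ have weighted logarithmic modulus of continuity Ω(f, δ). Then for every λ > 0 and δ > 0, Ω(f, λδ) ≤ 2 (1 + λ)³ (1 + δ²) Ω(f, δ). -/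
set_option maxHeartbeats 1000000


/-- Ω(f, λδ) ≤ 2 (1 + λ)³ (1 + δ²) Ω(f, δ). -/
theorem stmt14 (f : ℝ → ℝ)
    (hfin : ∀ δ > (0:ℝ), ∃ C : ℝ, ∀ t > (0:ℝ), ∀ x > (0:ℝ), |Real.log t| ≤ δ →
      |f (t * x) - f x| / ((1 + Real.log x ^ 2) * (1 + Real.log t ^ 2)) ≤ C) :
    ∀ lam > (0:ℝ), ∀ δ > (0:ℝ),
      Omeg f (lam * δ) ≤ 2 * (1 + lam) ^ 3 * (1 + δ ^ 2) * Omeg f δ := by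
  intro lam hlam δ hδ
  obtain ⟨C, hC⟩ := hfin δ hδ
  set Ω := Omeg f δ with hΩdef
  have hbdd : BddAbove (Set.range
      (fun p : {p : ℝ × ℝ // 0 < p.1 ∧ 0 < p.2 ∧ |Real.log p.1| ≤ δ} =>
        |f (p.1.1 * p.1.2) - f p.1.2| /
          ((1 + Real.log p.1.2 ^ 2) * (1 + Real.log p.1.1 ^ 2)))) := by
    refine ⟨C, ?_⟩
    rintro y ⟨p, rfl⟩
    exact hC p.1.1 p.2.1 p.1.2 p.2.2.1 p.2.2.2
  have hΩ_ge : ∀ t x : ℝ, 0 < t → 0 < x → |Real.log t| ≤ δ →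
      |f (t * x) - f x| / ((1 + Real.log x ^ 2) * (1 + Real.log t ^ 2)) ≤ Ω := by
    intro t x ht hx hlt
    exact le_ciSup hbdd ⟨(t, x), ht, hx, hlt⟩
  have hΩ0 : (0:ℝ) ≤ Ω := by
    have := hΩ_ge 1 1 one_pos one_pos (by simp [hδ.le])
    exact le_trans (by positivity) this
  have hΩ_num : ∀ t x : ℝ, 0 < t → 0 < x → |Real.log t| ≤ δ →
      |f (t * x) - f x| ≤ Ω * ((1 + Real.log x ^ 2) * (1 + Real.log t ^ 2)) := by
    intro t x ht hx hlt
    have hD : (0:ℝ) < (1 + Real.log x ^ 2) * (1 + Real.log t ^ 2) := by positivity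
    have := hΩ_ge t x ht hx hlt
    calc |f (t * x) - f x|
        = |f (t * x) - f x| / ((1 + Real.log x ^ 2) * (1 + Real.log t ^ 2))
            * ((1 + Real.log x ^ 2) * (1 + Real.log t ^ 2)) := by
          field_simp
      _ ≤ Ω * ((1 + Real.log x ^ 2) * (1 + Real.log t ^ 2)) :=
          mul_le_mul_of_nonneg_right this hD.le
  -- key pointwise bound
  have key : ∀ t x : ℝ, 0 < t → 0 < x → |Real.log t| ≤ lam * δ →
      |f (t * x) - f x| ≤ 2 * (1 + lam) ^ 3 * (1 + δ ^ 2) * Ω *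
        ((1 + Real.log x ^ 2) * (1 + Real.log t ^ 2)) := by
    intro t x ht hx hlt
    set n : ℕ := ⌈lam⌉₊ with hn
    have hn1 : 1 ≤ n := Nat.one_le_iff_ne_zero.mpr (by
      simp [hn, Nat.ceil_eq_zero, not_le, hlam])
    have hnR : (1:ℝ) ≤ (n:ℝ) := by exact_mod_cast hn1
    have hnpos : (0:ℝ) < (n:ℝ) := lt_of_lt_of_le one_pos hnR
    have hlamn : lam ≤ (n:ℝ) := Nat.le_ceil lam
    have hnlam : (n:ℝ) ≤ 1 + lam := by
      have := Nat.ceil_lt_add_one hlam.le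
      linarith [this]
    set s : ℝ := t ^ ((n:ℝ)⁻¹) with hs
    have hspos : 0 < s := Real.rpow_pos_of_pos ht _
    have hlogs : Real.log s = (n:ℝ)⁻¹ * Real.log t := Real.log_rpow ht _
    have hsn : s ^ n = t := by
      rw [hs, ← Real.rpow_natCast (t ^ ((n:ℝ)⁻¹)) n, ← Real.rpow_mul ht.le]
      rw [inv_mul_cancel₀ (ne_of_gt hnpos), Real.rpow_one]
    have habs_s : |Real.log s| ≤ δ := by
      rw [hlogs, abs_mul, abs_of_pos (inv_pos.mpr hnpos)]
      rw [inv_mul_le_iff₀ hnpos]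
      calc |Real.log t| ≤ lam * δ := hlt
        _ ≤ (n:ℝ) * δ := by nlinarith
    have habs_s' : |Real.log s| ≤ |Real.log t| := by
      rw [hlogs, abs_mul, abs_of_pos (inv_pos.mpr hnpos)]
      nlinarith [abs_nonneg (Real.log t), inv_le_one_of_one_le₀ hnR,
        inv_pos.mpr hnpos]
    -- telescoping
    have htel : f (t * x) - f x =
        ∑ k ∈ Finset.range n, (f (s ^ (k + 1) * x) - f (s ^ k * x)) := by
      rw [Finset.sum_range_sub (fun k => f (s ^ k * x))]
      simp [hsn]
    -- bound each term
    have hterm : ∀ k ∈ Finset.range n,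
        |f (s ^ (k + 1) * x) - f (s ^ k * x)| ≤
          Ω * (2 * (1 + lam ^ 2 * δ ^ 2) * (1 + Real.log x ^ 2)) *
            (1 + Real.log t ^ 2) := by
      intro k hk
      have hk' : k < n := Finset.mem_range.mp hk
      have hxk : 0 < s ^ k * x := by positivity
      have h1 : |f (s * (s ^ k * x)) - f (s ^ k * x)| ≤
          Ω * ((1 + Real.log (s ^ k * x) ^ 2) * (1 + Real.log s ^ 2)) :=
        hΩ_num s (s ^ k * x) hspos hxk habs_s
      have hlogxk : Real.log (s ^ k * x) = (k:ℝ) * Real.log s + Real.log x := by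
        rw [Real.log_mul (ne_of_gt (pow_pos hspos k)) (ne_of_gt hx), Real.log_pow]
      have hkls : |(k:ℝ) * Real.log s| ≤ lam * δ := by
        rw [abs_mul, abs_of_nonneg (Nat.cast_nonneg k)]
        calc (k:ℝ) * |Real.log s| ≤ (n:ℝ) * |Real.log s| := by
              have : (k:ℝ) ≤ (n:ℝ) := by exact_mod_cast hk'.le
              nlinarith [abs_nonneg (Real.log s)]
          _ ≤ |Real.log t| := by
              rw [hlogs, abs_mul, abs_of_pos (inv_pos.mpr hnpos)]
              rw [← mul_assoc, mul_inv_cancel₀ (ne_of_gt hnpos), one_mul]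
          _ ≤ lam * δ := hlt
    -- (1 + log² x_k) ≤ 2 (1 + λ²δ²)(1 + log² x)
      have hA : 1 + Real.log (s ^ k * x) ^ 2 ≤
          2 * (1 + lam ^ 2 * δ ^ 2) * (1 + Real.log x ^ 2) := by
        rw [hlogxk]
        have h2 : ((k:ℝ) * Real.log s) ^ 2 ≤ (lam * δ) ^ 2 := by
          have := abs_nonneg ((k:ℝ) * Real.log s)
          nlinarith [sq_abs ((k:ℝ) * Real.log s)]
        nlinarith [sq_nonneg (Real.log x), sq_nonneg ((k:ℝ) * Real.log s - Real.log x),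
          sq_nonneg ((k:ℝ) * Real.log s + Real.log x), sq_nonneg (lam * δ)]
      have hB : 1 + Real.log s ^ 2 ≤ 1 + Real.log t ^ 2 := by
        nlinarith [sq_abs (Real.log s), sq_abs (Real.log t), abs_nonneg (Real.log s),
          abs_nonneg (Real.log t)]
      calc |f (s ^ (k + 1) * x) - f (s ^ k * x)|
          = |f (s * (s ^ k * x)) - f (s ^ k * x)| := by rw [pow_succ', mul_assoc]
        _ ≤ Ω * ((1 + Real.log (s ^ k * x) ^ 2) * (1 + Real.log s ^ 2)) := h1
        _ ≤ Ω * (2 * (1 + lam ^ 2 * δ ^ 2) * (1 + Real.log x ^ 2)) *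
              (1 + Real.log t ^ 2) := by
            rw [mul_assoc Ω]
            apply mul_le_mul_of_nonneg_left _ hΩ0
            apply mul_le_mul hA hB (by positivity) (by positivity)
    have hsum : |f (t * x) - f x| ≤
        (n:ℝ) * (Ω * (2 * (1 + lam ^ 2 * δ ^ 2) * (1 + Real.log x ^ 2)) *
          (1 + Real.log t ^ 2)) := by
      rw [htel]
      calc |∑ k ∈ Finset.range n, (f (s ^ (k + 1) * x) - f (s ^ k * x))|
          ≤ ∑ k ∈ Finset.range n, |f (s ^ (k + 1) * x) - f (s ^ k * x)| :=
            Finset.abs_sum_le_sum_abs _ _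
        _ ≤ ∑ _k ∈ Finset.range n,
              (Ω * (2 * (1 + lam ^ 2 * δ ^ 2) * (1 + Real.log x ^ 2)) *
                (1 + Real.log t ^ 2)) := Finset.sum_le_sum hterm
        _ = (n:ℝ) * (Ω * (2 * (1 + lam ^ 2 * δ ^ 2) * (1 + Real.log x ^ 2)) *
              (1 + Real.log t ^ 2)) := by
            rw [Finset.sum_const, Finset.card_range]; simp [nsmul_eq_mul]
    refine hsum.trans ?_
    have hcoef : (n:ℝ) * (2 * (1 + lam ^ 2 * δ ^ 2)) ≤
        2 * (1 + lam) ^ 3 * (1 + δ ^ 2) := by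
      nlinarith [sq_nonneg lam, sq_nonneg δ, sq_nonneg (lam * δ), mul_pos hlam hδ]
    have hpos : (0:ℝ) ≤ Ω * ((1 + Real.log x ^ 2) * (1 + Real.log t ^ 2)) := by
      positivity
    calc (n:ℝ) * (Ω * (2 * (1 + lam ^ 2 * δ ^ 2) * (1 + Real.log x ^ 2)) *
          (1 + Real.log t ^ 2))
        = ((n:ℝ) * (2 * (1 + lam ^ 2 * δ ^ 2))) *
            (Ω * ((1 + Real.log x ^ 2) * (1 + Real.log t ^ 2))) := by ring
      _ ≤ (2 * (1 + lam) ^ 3 * (1 + δ ^ 2)) *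
            (Ω * ((1 + Real.log x ^ 2) * (1 + Real.log t ^ 2))) :=
          mul_le_mul_of_nonneg_right hcoef hpos
      _ = 2 * (1 + lam) ^ 3 * (1 + δ ^ 2) * Ω *
            ((1 + Real.log x ^ 2) * (1 + Real.log t ^ 2)) := by ring
  -- conclude
  rw [Omeg]
  haveI : Nonempty {p : ℝ × ℝ // 0 < p.1 ∧ 0 < p.2 ∧ |Real.log p.1| ≤ lam * δ} :=
    ⟨⟨(1, 1), one_pos, one_pos, by simp [le_of_lt (mul_pos hlam hδ)]⟩⟩
  apply ciSup_le
  rintro ⟨⟨t, x⟩, ht, hx, hlt⟩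
  have hD : (0:ℝ) < (1 + Real.log x ^ 2) * (1 + Real.log t ^ 2) := by positivity
  rw [div_le_iff₀ hD]
  exact key t x ht hx hlt
end

section
/- Let χ be a nonnegative kernel with m_0(χ), m_5(χ) < ∞ and η := inf_{[1,e]} χ > 0. Let f : ℝ⁺ → [0,∞) be in the weighted space with finite weighted logarithmic modulus of continuity Ω(f, ·). Then for every w ≥ 1 and x ∈ ℝ⁺, |MG_w^χ(f, x) − f(x)| ≤ [64 (1 + log²x) Ω(f, 1/w) / η] · [m_0(χ) + m_5(χ)]. -/
lemma tele_aux (f : ℝ → ℝ) (δ Ω : ℝ) (hΩ0 : 0 ≤ Ω)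
    (hΩ : ∀ t > (0:ℝ), ∀ y > (0:ℝ), |Real.log t| ≤ δ →
      |f (t * y) - f y| ≤ Ω * (1 + Real.log y ^ 2) * (1 + Real.log t ^ 2))
    (σ : ℝ) (hσ : |σ| ≤ δ) :
    ∀ n : ℕ, ∀ y > (0:ℝ), |f (Real.exp ((n:ℝ) * σ) * y) - f y| ≤
      (n:ℝ) * (Ω * (1 + δ ^ 2) * (1 + (|Real.log y| + (n:ℝ) * |σ|) ^ 2)) := by
  intro n
  induction n with
  | zero => intro y hy; simp
  | succ n ih =>
    intro y hy
    have hδ0 : 0 ≤ δ := le_trans (abs_nonneg σ) hσ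
    have hyn : 0 < Real.exp ((n:ℝ) * σ) * y := by positivity
    have key := hΩ (Real.exp σ) (Real.exp_pos σ) (Real.exp ((n:ℝ)*σ) * y) hyn
      (by rw [Real.log_exp]; exact hσ)
    have hlog : Real.log (Real.exp ((n:ℝ)*σ) * y) = (n:ℝ)*σ + Real.log y := by
      rw [Real.log_mul (Real.exp_ne_zero _) (ne_of_gt hy), Real.log_exp]
    rw [hlog, Real.log_exp] at key
    -- bound the first term
    have habs : |(n:ℝ)*σ + Real.log y| ≤ |Real.log y| + ((n:ℝ)+1) * |σ| := by
      calc |(n:ℝ)*σ + Real.log y| ≤ |(n:ℝ)*σ| + |Real.log y| := abs_add_le _ _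
        _ = (n:ℝ)*|σ| + |Real.log y| := by rw [abs_mul, Nat.abs_cast]
        _ ≤ |Real.log y| + ((n:ℝ)+1) * |σ| := by nlinarith [abs_nonneg σ]
    have hsq1 : ((n:ℝ)*σ + Real.log y)^2 ≤ (|Real.log y| + ((n:ℝ)+1) * |σ|)^2 := by
      rw [← sq_abs]
      exact pow_le_pow_left₀ (abs_nonneg _) habs 2
    have hsq2 : σ^2 ≤ δ^2 := by
      rw [← sq_abs]; exact pow_le_pow_left₀ (abs_nonneg _) hσ 2
    have key2 : |f (Real.exp σ * (Real.exp ((n:ℝ)*σ) * y)) - f (Real.exp ((n:ℝ)*σ) * y)| ≤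
        Ω * (1 + δ^2) * (1 + (|Real.log y| + ((n:ℝ)+1) * |σ|) ^ 2) := by
      calc |f (Real.exp σ * (Real.exp ((n:ℝ)*σ) * y)) - f (Real.exp ((n:ℝ)*σ) * y)|
          ≤ Ω * (1 + ((n:ℝ)*σ + Real.log y) ^ 2) * (1 + σ ^ 2) := key
        _ ≤ Ω * (1 + (|Real.log y| + ((n:ℝ)+1) * |σ|) ^ 2) * (1 + δ ^ 2) := by
            apply mul_le_mul _ (by linarith) (by positivity) (by positivity)
            apply mul_le_mul_of_nonneg_left (by linarith) hΩ0
        _ = Ω * (1 + δ^2) * (1 + (|Real.log y| + ((n:ℝ)+1) * |σ|) ^ 2) := by ring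
    have ih2 : |f (Real.exp ((n:ℝ)*σ) * y) - f y| ≤
        (n:ℝ) * (Ω * (1 + δ ^ 2) * (1 + (|Real.log y| + ((n:ℝ)+1) * |σ|) ^ 2)) := by
      refine le_trans (ih y hy) ?_
      have hmono : (|Real.log y| + (n:ℝ) * |σ|)^2 ≤ (|Real.log y| + ((n:ℝ)+1) * |σ|)^2 := by
        apply pow_le_pow_left₀ (by positivity)
        nlinarith [abs_nonneg σ]
      have : Ω * (1 + δ ^ 2) * (1 + (|Real.log y| + (n:ℝ) * |σ|) ^ 2) ≤
          Ω * (1 + δ ^ 2) * (1 + (|Real.log y| + ((n:ℝ)+1) * |σ|) ^ 2) := by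
        apply mul_le_mul_of_nonneg_left (by linarith) (by positivity)
      exact mul_le_mul_of_nonneg_left this (by positivity)
    have hEq : Real.exp ((↑(n+1):ℝ) * σ) * y = Real.exp σ * (Real.exp ((n:ℝ)*σ) * y) := by
      rw [← mul_assoc, ← Real.exp_add]
      push_cast
      ring_nf
    calc |f (Real.exp ((↑(n+1):ℝ) * σ) * y) - f y|
        = |f (Real.exp σ * (Real.exp ((n:ℝ)*σ) * y)) - f y| := by rw [hEq]
      _ ≤ |f (Real.exp σ * (Real.exp ((n:ℝ)*σ) * y)) - f (Real.exp ((n:ℝ)*σ) * y)|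
            + |f (Real.exp ((n:ℝ)*σ) * y) - f y| := abs_sub_le _ _ _
      _ ≤ (↑(n+1):ℝ) * (Ω * (1 + δ ^ 2) * (1 + (|Real.log y| + (↑(n+1):ℝ) * |σ|) ^ 2)) := by
          push_cast
          linarith

lemma inc_bound (f : ℝ → ℝ) (δ Ω : ℝ) (hδ : 0 < δ) (hδ1 : δ ≤ 1) (hΩ0 : 0 ≤ Ω)
    (hΩ : ∀ t > (0:ℝ), ∀ y > (0:ℝ), |Real.log t| ≤ δ →
      |f (t * y) - f y| ≤ Ω * (1 + Real.log y ^ 2) * (1 + Real.log t ^ 2)) :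
    ∀ t > (0:ℝ), ∀ y > (0:ℝ), |f (t * y) - f y| ≤
      32 * Ω * (1 + Real.log y ^ 2) * (1 + (|Real.log t| / δ) ^ 5) := by
  intro t ht y hy
  set s := Real.log t with hs
  set n : ℕ := max 1 ⌈|s| / δ⌉₊ with hn
  have hn1 : (1:ℝ) ≤ (n:ℝ) := by exact_mod_cast le_max_left 1 ⌈|s| / δ⌉₊
  have hnpos : (0:ℝ) < (n:ℝ) := by linarith
  have hge : |s|/δ ≤ (n:ℝ) := by
    refine le_trans (Nat.le_ceil _) ?_
    exact_mod_cast le_max_right 1 ⌈|s| / δ⌉₊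
  have hle : (n:ℝ) ≤ 1 + |s|/δ := by
    have h1 : (⌈|s|/δ⌉₊:ℝ) < |s|/δ + 1 := Nat.ceil_lt_add_one (by positivity)
    have h2 : (n:ℝ) = max 1 (⌈|s|/δ⌉₊:ℝ) := by rw [hn]; push_cast; rfl
    rw [h2]
    apply max_le
    · have : (0:ℝ) ≤ |s|/δ := by positivity
      linarith
    · linarith
  set σ := s / (n:ℝ) with hσdef
  have hσ : |σ| ≤ δ := by
    rw [hσdef, abs_div, abs_of_pos hnpos, div_le_iff₀ hnpos]
    calc |s| = (|s|/δ) * δ := by field_simp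
      _ ≤ (n:ℝ) * δ := by apply mul_le_mul_of_nonneg_right hge hδ.le
      _ = δ * (n:ℝ) := by ring
  have hnσs : (n:ℝ) * σ = s := by rw [hσdef]; field_simp
  have hts : t * y = Real.exp ((n:ℝ) * σ) * y := by
    rw [hnσs, hs, Real.exp_log ht]
  have hnσ : (n:ℝ) * |σ| = |s| := by
    rw [hσdef, abs_div, abs_of_pos hnpos]; field_simp
  have main := tele_aux f δ Ω hΩ0 hΩ σ hσ n y hy
  rw [← hts, hnσ] at main
  set L := |Real.log y| with hL
  set r := |s| / δ with hr
  have hr0 : 0 ≤ r := by positivity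
  have hsr : |s| ≤ r := by
    rw [hr, le_div_iff₀ hδ]
    nlinarith [abs_nonneg s]
  have h1 : 1 + (L + |s|)^2 ≤ 2*(1+L^2)*(1+|s|^2) := by
    nlinarith [sq_nonneg (L - |s|), sq_nonneg (L*|s|)]
  have hδ2 : 1 + δ^2 ≤ 2 := by nlinarith
  have hs2 : 1 + |s|^2 ≤ 1 + r^2 := by
    have := pow_le_pow_left₀ (abs_nonneg s) hsr 2
    linarith
  have h3 : (1+r)*(1+r^2) ≤ 8*(1+r^5) := by
    rcases le_total r 1 with h | h
    · have hr2 : r^2 ≤ 1 := pow_le_one₀ hr0 h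
      have hr3 : r^3 ≤ 1 := pow_le_one₀ hr0 h
      nlinarith [pow_nonneg hr0 5]
    · have h5a : r^3 ≤ r^5 := pow_le_pow_right₀ h (by norm_num)
      have h5b : r^2 ≤ r^5 := pow_le_pow_right₀ h (by norm_num)
      have h5c : r ≤ r^5 := by
        calc r = r^1 := (pow_one r).symm
          _ ≤ r^5 := pow_le_pow_right₀ h (by norm_num)
      have hexp : (1+r)*(1+r^2) = 1 + r + r^2 + r^3 := by ring
      have h50 : 0 ≤ r^5 := pow_nonneg hr0 5
      linarith [hexp.le, hexp.ge]
  have stepA : (n:ℝ) * ((1+δ^2)*(1+(L+|s|)^2)) ≤ 32*(1+L^2)*(1+r^5) := by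
    calc (n:ℝ) * ((1+δ^2)*(1+(L+|s|)^2))
        ≤ (n:ℝ) * (2*(2*(1+L^2)*(1+|s|^2))) := by
          refine mul_le_mul_of_nonneg_left ?_ hnpos.le
          exact mul_le_mul hδ2 h1 (by positivity) (by norm_num)
      _ = 4*(1+L^2)*((n:ℝ)*(1+|s|^2)) := by ring
      _ ≤ 4*(1+L^2)*((1+r)*(1+r^2)) := by
          refine mul_le_mul_of_nonneg_left ?_ (by positivity)
          exact mul_le_mul hle hs2 (by positivity) (by positivity)
      _ ≤ 4*(1+L^2)*(8*(1+r^5)) := mul_le_mul_of_nonneg_left h3 (by positivity)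
      _ = 32*(1+L^2)*(1+r^5) := by ring
  have hL2 : L^2 = Real.log y ^ 2 := sq_abs _
  calc |f (t*y) - f y| ≤ (n:ℝ) * (Ω * (1 + δ ^ 2) * (1 + (L + |s|) ^ 2)) := main
    _ = Ω * ((n:ℝ) * ((1+δ^2)*(1+(L+|s|)^2))) := by ring
    _ ≤ Ω * (32*(1+L^2)*(1+r^5)) := mul_le_mul_of_nonneg_left stepA hΩ0
    _ = 32 * Ω * (1 + Real.log y ^ 2) * (1 + r ^ 5) := by rw [← hL2]; ring


set_option maxHeartbeats 1000000 in
/-- quantitative rate of approximation via the weighted modulus. -/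
theorem stmt15 (χ : ℝ → ℝ) (hχ0 : ∀ u : ℝ, 0 ≤ χ u)
    (m0 m5 : ℝ)
    (hm0 : ∀ u > (0:ℝ), ∀ k : ℤ, |χ (Real.exp (-(k:ℝ)) * u)| ≤ m0)
    (hm5 : ∀ u > (0:ℝ), ∀ k : ℤ,
      |χ (Real.exp (-(k:ℝ)) * u)| * |(k:ℝ) - Real.log u| ^ 5 ≤ m5)
    (η : ℝ) (hη : 0 < η) (hinf : ∀ x ∈ Set.Icc (1:ℝ) (Real.exp 1), η ≤ χ x)
    (f : ℝ → ℝ) (hf0 : ∀ y > (0:ℝ), 0 ≤ f y)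
    (hfin : ∀ δ > (0:ℝ), ∃ C : ℝ, ∀ t > (0:ℝ), ∀ x > (0:ℝ), |Real.log t| ≤ δ →
      |f (t * x) - f x| / ((1 + Real.log x ^ 2) * (1 + Real.log t ^ 2)) ≤ C) :
    ∀ w ≥ (1:ℝ), ∀ x > (0:ℝ),
      |MGZ χ f w x - f x| ≤
        64 * (1 + Real.log x ^ 2) * Omeg f (1 / w) / η * (m0 + m5) := by
  intro w hw x hx
  have hw0 : (0:ℝ) < w := lt_of_lt_of_le one_pos hw
  have hδ : (0:ℝ) < 1/w := by positivity
  have hδ1 : 1/w ≤ 1 := by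
    rw [div_le_one hw0]; exact hw
  set Ω := Omeg f (1/w) with hΩdef
  -- basic facts about Ω
  obtain ⟨C, hC⟩ := hfin (1/w) hδ
  have hbdd : BddAbove (Set.range fun p : {p : ℝ × ℝ // 0 < p.1 ∧ 0 < p.2 ∧ |Real.log p.1| ≤ 1/w} =>
      |f (p.1.1 * p.1.2) - f p.1.2| /
        ((1 + Real.log p.1.2 ^ 2) * (1 + Real.log p.1.1 ^ 2))) := by
    refine ⟨C, ?_⟩
    rintro y ⟨⟨⟨t, z⟩, ht, hz, hlt⟩, rfl⟩
    exact hC t ht z hz hlt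
  have hΩ0 : 0 ≤ Ω := by
    have h0 : |f ((1:ℝ) * 1) - f 1| / ((1 + Real.log 1 ^ 2) * (1 + Real.log 1 ^ 2)) ≤ Ω :=
      le_ciSup hbdd ⟨((1:ℝ), (1:ℝ)), one_pos, one_pos, by simp; positivity⟩
    simpa using h0
  have hΩpt : ∀ t > (0:ℝ), ∀ y > (0:ℝ), |Real.log t| ≤ 1/w →
      |f (t * y) - f y| ≤ Ω * (1 + Real.log y ^ 2) * (1 + Real.log t ^ 2) := by
    intro t ht y hy hlt
    have h1 : |f (t * y) - f y| / ((1 + Real.log y ^ 2) * (1 + Real.log t ^ 2)) ≤ Ω :=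
      le_ciSup hbdd ⟨(t, y), ht, hy, hlt⟩
    rw [div_le_iff₀ (by positivity)] at h1
    rw [mul_assoc]
    exact h1
  -- the increment bound
  have hinc := inc_bound f (1/w) Ω hδ hδ1 hΩ0 hΩpt
  -- notation
  set A := 1 + Real.log x ^ 2 with hA
  have hA1 : (1:ℝ) ≤ A := by nlinarith [sq_nonneg (Real.log x)]
  have hA0 : (0:ℝ) < A := by linarith
  have hxw : (0:ℝ) < x ^ w := Real.rpow_pos_of_pos hx w
  have hlogxw : Real.log (x ^ w) = w * Real.log x := Real.log_rpow hx w
  set χk : ℤ → ℝ := fun k => χ (Real.exp (-(k:ℝ)) * x ^ w) with hχk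
  set fk : ℤ → ℝ := fun k => f (Real.exp ((k:ℝ) / w)) with hfk
  have hχk0 : ∀ k, 0 ≤ χk k := fun k => hχ0 _
  have hfk0 : ∀ k, 0 ≤ fk k := fun k => hf0 _ (Real.exp_pos _)
  have hfx0 : 0 ≤ f x := hf0 x hx
  have hχkm0 : ∀ k, χk k ≤ m0 := by
    intro k
    have := hm0 (x ^ w) hxw k
    rwa [abs_of_nonneg (hχ0 _)] at this
  have hm0nn : 0 ≤ m0 := le_trans (hχk0 0) (hχkm0 0)
  have hm5nn : 0 ≤ m5 := by
    have := hm5 1 one_pos 0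
    simpa using le_trans (by positivity) this
  have hχkm5 : ∀ k, χk k * |(k:ℝ) - w * Real.log x| ^ 5 ≤ m5 := by
    intro k
    have := hm5 (x ^ w) hxw k
    rwa [hlogxw, abs_of_nonneg (hχ0 _)] at this
  -- denominator bounds
  have hDbdd : BddAbove (Set.range χk) := by
    refine ⟨m0, ?_⟩; rintro y ⟨k, rfl⟩; exact hχkm0 k
  set D := ⨆ k : ℤ, χk k with hD
  have hDη : η ≤ D := by
    set k0 : ℤ := ⌊w * Real.log x⌋ with hk0
    have hfl1 : (k0:ℝ) ≤ w * Real.log x := Int.floor_le _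
    have hfl2 : w * Real.log x < (k0:ℝ) + 1 := Int.lt_floor_add_one _
    have hval : Real.exp (-(k0:ℝ)) * x ^ w = Real.exp (w * Real.log x - (k0:ℝ)) := by
      rw [Real.rpow_def_of_pos hx, ← Real.exp_add]
      ring_nf
    have hmem : Real.exp (-(k0:ℝ)) * x ^ w ∈ Set.Icc (1:ℝ) (Real.exp 1) := by
      rw [hval]
      constructor
      · calc (1:ℝ) = Real.exp 0 := Real.exp_zero.symm
          _ ≤ Real.exp (w * Real.log x - (k0:ℝ)) := Real.exp_le_exp.mpr (by linarith)
      · exact Real.exp_le_exp.mpr (by linarith)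
    exact le_trans (hinf _ hmem) (le_ciSup hDbdd k0)
  have hD0 : 0 < D := lt_of_lt_of_le hη hDη
  -- increment bound for each k
  have hrk : ∀ k : ℤ, |Real.log (Real.exp ((k:ℝ)/w) / x)| / (1/w) = |(k:ℝ) - w * Real.log x| := by
    intro k
    rw [Real.log_div (Real.exp_ne_zero _) (ne_of_gt hx), Real.log_exp]
    have h2 : |((k:ℝ)/w - Real.log x) * w| = |(k:ℝ)/w - Real.log x| * w := by
      rw [abs_mul, abs_of_pos hw0]
    rw [div_div_eq_mul_div, div_one, ← h2]
    congr 1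
    field_simp
  have hincf : ∀ k : ℤ, |fk k - f x| ≤ 32 * Ω * A * (1 + |(k:ℝ) - w * Real.log x| ^ 5) := by
    intro k
    have htk : (0:ℝ) < Real.exp ((k:ℝ)/w) / x := by positivity
    have htx : Real.exp ((k:ℝ)/w) / x * x = Real.exp ((k:ℝ)/w) := by field_simp
    have h := hinc (Real.exp ((k:ℝ)/w) / x) htk x hx
    rw [htx] at h
    show |f (Real.exp ((k:ℝ)/w)) - f x| ≤ _
    calc |f (Real.exp ((k:ℝ)/w)) - f x|
        ≤ 32 * Ω * (1 + Real.log x ^ 2) * (1 + (|Real.log (Real.exp ((k:ℝ)/w) / x)| / (1/w)) ^ 5) := h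
      _ = 32 * Ω * A * (1 + |(k:ℝ) - w * Real.log x| ^ 5) := by rw [hrk k, hA]
  set M := 32 * Ω * A * (m0 + m5) with hM
  have hM0 : 0 ≤ M := by positivity
  have hkey : ∀ k : ℤ, χk k * |fk k - f x| ≤ M := by
    intro k
    calc χk k * |fk k - f x|
        ≤ χk k * (32 * Ω * A * (1 + |(k:ℝ) - w * Real.log x| ^ 5)) :=
          mul_le_mul_of_nonneg_left (hincf k) (hχk0 k)
      _ = 32 * Ω * A * (χk k + χk k * |(k:ℝ) - w * Real.log x| ^ 5) := by ring
      _ ≤ 32 * Ω * A * (m0 + m5) := by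
          apply mul_le_mul_of_nonneg_left _ (by positivity)
          exact add_le_add (hχkm0 k) (hχkm5 k)
      _ = M := hM.symm
  -- numerator bounds
  have hterm : ∀ k : ℤ, χk k * fk k ≤ f x * χk k + M := by
    intro k
    have h1 : χk k * fk k - χk k * f x ≤ χk k * |fk k - f x| := by
      calc χk k * fk k - χk k * f x = χk k * (fk k - f x) := by ring
        _ ≤ χk k * |fk k - f x| := mul_le_mul_of_nonneg_left (le_abs_self _) (hχk0 k)
    have := hkey k
    nlinarith [this, h1]
  have hNbdd : BddAbove (Set.range fun k : ℤ => χk k * fk k) := by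
    refine ⟨m0 * f x + M, ?_⟩
    rintro y ⟨k, rfl⟩
    calc χk k * fk k ≤ f x * χk k + M := hterm k
      _ ≤ m0 * f x + M := by nlinarith [hχkm0 k, hχk0 k, hfx0]
  set N := ⨆ k : ℤ, χk k * fk k with hN
  have hN_ub : N ≤ f x * D + M := by
    apply ciSup_le
    intro k
    calc χk k * fk k ≤ f x * χk k + M := hterm k
      _ ≤ f x * D + M := by
          have := le_ciSup hDbdd k
          nlinarith [this, hfx0]
  have hN_lb : f x * D ≤ N + M := by
    rw [hD, Real.mul_iSup_of_nonneg hfx0]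
    apply ciSup_le
    intro k
    have h1 : f x * χk k - χk k * fk k ≤ χk k * |fk k - f x| := by
      calc f x * χk k - χk k * fk k = χk k * (f x - fk k) := by ring
        _ ≤ χk k * |fk k - f x| := by
            apply mul_le_mul_of_nonneg_left _ (hχk0 k)
            rw [abs_sub_comm]
            exact le_abs_self _
    have h2 := le_ciSup hNbdd k
    have h3 := hkey k
    nlinarith [h1, h2, h3]
  -- conclude
  have hMGZ : MGZ χ f w x = N / D := rfl
  have habs : |N - f x * D| ≤ M := by
    rw [abs_le]
    constructor <;> linarith
  have hfinal : |MGZ χ f w x - f x| ≤ M / η := by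
    rw [hMGZ]
    have hND : N / D - f x = (N - f x * D) / D := by field_simp
    rw [hND, abs_div, abs_of_pos hD0]
    calc |N - f x * D| / D ≤ M / D := by gcongr
      _ ≤ M / η := by gcongr
  calc |MGZ χ f w x - f x| ≤ M / η := hfinal
    _ = 32 * Ω * A * (m0 + m5) / η := by rw [hM]
    _ ≤ 64 * A * Ω / η * (m0 + m5) := by
        rw [div_mul_eq_mul_div, div_le_div_iff₀ hη hη]
        nlinarith [mul_nonneg (mul_nonneg hΩ0 hA0.le) (add_nonneg hm0nn hm5nn), hη.le]
    _ = 64 * (1 + Real.log x ^ 2) * Ω / η * (m0 + m5) := by rw [hA]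
end
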